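/- Let (θ, S, X) be an ample dynamical system and (θ⁺, S⁺, X) its unitization, where S⁺ = S ⊔ {1} and θ₁ = id_X. Then the crossed products L_c(X) ⋊_α S and L_c(X) ⋊_{α⁺} S⁺ are isomorphic as K-algebras. -/

import Mathlib

/-- An inverse semigroup: a semigroup with an involution `star` such that
`a (star a) a = a`, `(star a) a (star a) = star a`, and idempotents commute. -/
class InverseSemigroup (S : Type*) extends Semigroup S, Star S where
  star_star : ∀ a : S, star (star a) = a
  mul_star_mul : ∀ a : S, a * star a * a = a
  star_mul_star : ∀ a : S, star a * a * star a = star a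
  star_mul : ∀ a b : S, star (a * b) = star b * star a
  idem_comm : ∀ e f : S, e * e = e → f * f = f → e * f = f * e

/-- The natural partial order on an inverse semigroup: `s ≤ t` iff `s = t e`
for some idempotent `e`. -/
def ISle {S : Type*} [InverseSemigroup S] (s t : S) : Prop :=
  ∃ e : S, e * e = e ∧ s = t * e

/-- An ample action of an inverse semigroup `S` on a topological space `X`:
a semigroup homomorphism `s ↦ θ s` into partial homeomorphisms between clopen
subsets of `X` (composition with largest domains encoded via
`PartialEquiv.trans` and `EqOnSource`), with `θ (star s) = (θ s).symm`, whose
domains cover `X`.  (For an ample dynamical system, `X` is moreover assumed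
locally compact, Hausdorff and totally disconnected.) -/
structure AmpleSystem (S X : Type*) [InverseSemigroup S] [TopologicalSpace X] where
  θ : S → PartialHomeomorph X X
  hom : ∀ s t : S, (θ (s * t)).toPartialEquiv.EqOnSource
    ((θ t).toPartialEquiv.trans (θ s).toPartialEquiv)
  star_eq : ∀ s : S, (θ (star s)).toPartialEquiv.EqOnSource (θ s).toPartialEquiv.symm
  clopen : ∀ s : S, IsClopen (θ s).source
  cover : ∀ x : X, ∃ s : S, x ∈ (θ s).source

variable (K : Type*) [Field K]

/-- `L_c(X)`: the locally constant, compactly supported `K`-valued functions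
on `X` (a non-unital commutative `K`-algebra under pointwise operations). -/
def LcSet (X : Type*) [TopologicalSpace X] : Set (X → K) :=
  {f | IsLocallyConstant f ∧ HasCompactSupport f}

variable {S X : Type*} [InverseSemigroup S] [TopologicalSpace X]

/-- The globally defined endomorphism `ᾱ_s` of `L_c(X)`:
`ᾱ_s(f) = α_s(f · 1_{X_{s*s}})`, i.e. `(ᾱ_s f)(x) = f (θ_{s*} x)` for
`x ∈ X_{s s*}` and `0` otherwise. -/
noncomputable def barAlpha (T : AmpleSystem S X) (s : S) (f : X → K) : X → K :=
  (T.θ s).target.indicator (fun x => f ((T.θ s).symm x))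

/-- The fiber `B_s = L_c(X_{s s*})` of the semi-direct product bundle:
elements of `L_c(X)` vanishing outside `X_{s s*} = ran θ_s`. -/
def FibSet (T : AmpleSystem S X) (s : S) : Set (X → K) :=
  {f | f ∈ LcSet K X ∧ ∀ x ∉ (T.θ s).target, f x = 0}

/-- `L_c(X_e)` for an idempotent `e`: elements of `L_c(X)` vanishing outside
`X_e = dom θ_e`. -/
def LcE (T : AmpleSystem S X) (e : S) : Set (X → K) :=
  {f | f ∈ LcSet K X ∧ ∀ x ∉ (T.θ e).source, f x = 0}

/-- A covariant representation `(π, σ)` of an ample dynamical system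
`(θ, S, X)` on a `K`-vector space `V`: a non-degenerate representation `π` of
`L_c(X)` and a semigroup homomorphism `σ : S → End(V)` with
`π (α_s f) = σ_s π(f) σ_{s*}` for `f ∈ L_c(X_{s*s})`, and
`span {π(f) ξ : f ∈ L_c(X_e)} = σ_e(V)` for each idempotent `e`.
(`π` is recorded as a map on all of `X → K`; only its values on `L_c(X)` are
constrained.) -/
structure CovRep (T : AmpleSystem S X) (V : Type*) [AddCommGroup V]
    [Module K V] where
  π : (X → K) → Module.End K V
  σ : S → Module.End K V
  π_add : ∀ f ∈ LcSet K X, ∀ g ∈ LcSet K X, π (f + g) = π f + π g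
  π_smul : ∀ (c : K), ∀ f ∈ LcSet K X, π (c • f) = c • π f
  π_mul : ∀ f ∈ LcSet K X, ∀ g ∈ LcSet K X, π (f * g) = π f * π g
  π_nondeg : Submodule.span K {ξ : V | ∃ f ∈ LcSet K X, ∃ η : V, ξ = π f η} = ⊤
  σ_hom : ∀ s t : S, σ (s * t) = σ s * σ t
  covariant : ∀ s : S, ∀ f ∈ LcE K T (star s * s),
    π (barAlpha K T s f) = σ s * π f * σ (star s)
  essential : ∀ e : S, e * e = e →
    Submodule.span K {ξ : V | ∃ f ∈ LcE K T e, ∃ η : V, ξ = π f η} =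
      LinearMap.range (σ e)

/-- The defining relations of the crossed product `L_c(X) ⋊ S`, imposed on the
free `K`-algebra on formal symbols `f δ_s` (`s ∈ S`, `f : X → K`): symbols with
`f ∉ L_c(X_{s s*})` are discarded, the symbols are `K`-linear in `f` on each
fiber, `(f δ_s)(g δ_t) = f ᾱ_s(g) δ_{s t}`, and `f δ_s = f δ_t` whenever
`s ≤ t` and `f ∈ L_c(X_{s s*})`.  The quotient is precisely the universal
(cross-sectional) algebra of the semi-direct product bundle `B^θ`. -/
inductive CPRel {S X : Type*} [InverseSemigroup S] [TopologicalSpace X]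
    (K : Type*) [Field K] (T : AmpleSystem S X) :
    FreeAlgebra K (S × (X → K)) → FreeAlgebra K (S × (X → K)) → Prop
  | zero (s : S) (f : X → K) : f ∉ FibSet K T s →
      CPRel K T (FreeAlgebra.ι K (s, f)) 0
  | add (s : S) (f g : X → K) : f ∈ FibSet K T s → g ∈ FibSet K T s →
      CPRel K T (FreeAlgebra.ι K (s, f + g))
        (FreeAlgebra.ι K (s, f) + FreeAlgebra.ι K (s, g))
  | smul (s : S) (c : K) (f : X → K) : f ∈ FibSet K T s →
      CPRel K T (FreeAlgebra.ι K (s, c • f)) (c • FreeAlgebra.ι K (s, f))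
  | mul (s t : S) (f g : X → K) : f ∈ FibSet K T s → g ∈ FibSet K T t →
      CPRel K T (FreeAlgebra.ι K (s, f) * FreeAlgebra.ι K (t, g))
        (FreeAlgebra.ι K (s * t, f * barAlpha K T s g))
  | incl (s t : S) (f : X → K) : ISle s t → f ∈ FibSet K T s →
      CPRel K T (FreeAlgebra.ι K (s, f)) (FreeAlgebra.ι K (t, f))

/-- The crossed product algebra `L_c(X) ⋊ S` of an ample dynamical system. -/
abbrev CP {S X : Type*} [InverseSemigroup S] [TopologicalSpace X]
    (K : Type*) [Field K] (T : AmpleSystem S X) :=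
  RingQuot (CPRel K T)

/-- The element `f Δ_s` of the crossed product `L_c(X) ⋊ S`. -/
noncomputable def Delta {S X : Type*} [InverseSemigroup S] [TopologicalSpace X]
    (K : Type*) [Field K] (T : AmpleSystem S X) (s : S) (f : X → K) :
    CP K T :=
  RingQuot.mkAlgHom K (CPRel K T) (FreeAlgebra.ι K (s, f))


/-! The map `f δ_s ↦ f δ_{ι s}` is the forward isomorphism; the only new generators on the
other side are the `f δ_1`. By compactness of its support, `f ∈ L_c(X)` splits as a finite
sum `∑ hᵢ` with `hᵢ ∈ L_c(X_{eᵢ})` for idempotents `eᵢ`, and `f δ_1` is sent back to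
`∑ hᵢ δ_{eᵢ}`. This does not depend on the splitting: if `∑ hᵢ = 0`, cut every `hᵢ` along the
clopen set `X_{e₀}`; the inner parts may be moved to the fiber over `e₀` (since `h δ_e = h δ_{e'}`
whenever `h` lives on `X_e ∩ X_{e'}`, both being `h δ_{e e'}`) where they cancel `h₀ δ_{e₀}`, and
the outer parts form a vanishing sum with one term fewer. -/

namespace InverseSemigroup

theorem isIdempotentElem_mul_star_self (s : S) : IsIdempotentElem (s * star s) := by
  rw [IsIdempotentElem, ← mul_assoc, mul_star_mul]

theorem isle_refl (s : S) : ISle s s := by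
  refine ⟨star s * s, ?_, ?_⟩
  · simpa only [star_star] using (isIdempotentElem_mul_star_self (star s)).eq
  · rw [← mul_assoc, mul_star_mul]

theorem isle_mul_of_isIdempotentElem {e : S} (he : IsIdempotentElem e) (t : S) :
    ISle (e * t) t := by
  have hcomm : e * (t * star t) = t * star t * e :=
    idem_comm _ _ he (isIdempotentElem_mul_star_self t)
  refine ⟨star t * e * t, ?_, ?_⟩
  · calc star t * e * t * (star t * e * t) = star t * (e * (t * star t)) * e * t := by
          simp only [mul_assoc]
      _ = star t * t * star t * (e * e) * t := by rw [hcomm]; simp only [mul_assoc]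
      _ = star t * e * t := by rw [star_mul_star, he.eq]
  · calc e * t = e * (t * star t) * t := by rw [mul_assoc e, mul_star_mul]
      _ = t * (star t * e * t) := by rw [hcomm]; simp only [mul_assoc]

end InverseSemigroup

theorem ISle.map {S' : Type*} [InverseSemigroup S'] (φ : S →ₙ* S') {s t : S} (h : ISle s t) :
    ISle (φ s) (φ t) := by
  obtain ⟨e, he, rfl⟩ := h
  exact ⟨φ e, IsIdempotentElem.map he φ, map_mul φ t e⟩

namespace AmpleSystem

variable (T : AmpleSystem S X)

theorem source_star (s : S) : (T.θ (star s)).source = (T.θ s).target :=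
  (T.star_eq s).source_eq

theorem target_star (s : S) : (T.θ (star s)).target = (T.θ s).source :=
  (T.star_eq s).target_eq

theorem isClopen_target (s : S) : IsClopen (T.θ s).target :=
  source_star T s ▸ T.clopen (star s)

theorem target_mul (s t : S) :
    (T.θ (s * t)).target = (T.θ s).target ∩ (T.θ s).symm ⁻¹' (T.θ t).target :=
  (T.hom s t).target_eq

theorem target_mul_star_self (s : S) : (T.θ (s * star s)).target = (T.θ s).target := by
  rw [target_mul, target_star]
  exact Set.inter_eq_left.2 fun x hx => (T.θ s).map_target hx

theorem symm_apply_of_isIdempotentElem {e : S} (he : IsIdempotentElem e) {x : X}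
    (hx : x ∈ (T.θ e).target) : (T.θ e).symm x = x := by
  have h := T.hom e e
  rw [he.eq] at h
  have hx' : (T.θ e).symm x ∈ (T.θ e).target := (h.target_eq ▸ hx : _).2
  have heq : (T.θ e).symm x = (T.θ e).symm ((T.θ e).symm x) := by
    simpa using h.symm'.eqOn hx
  exact (T.θ e).symm.injOn hx' hx heq.symm

theorem target_mul_of_isIdempotentElem {e : S} (he : IsIdempotentElem e) (t : S) :
    (T.θ (e * t)).target = (T.θ e).target ∩ (T.θ t).target := by
  ext x
  rw [target_mul]
  exact and_congr_right fun hx => by rw [Set.mem_preimage, symm_apply_of_isIdempotentElem T he hx]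

variable {K}

variable (K X) in
def lcSubmodule : Submodule K (X → K) where
  carrier := LcSet K X
  add_mem' hf hg := ⟨hf.1.add hg.1, hf.2.add hg.2⟩
  zero_mem' := ⟨IsLocallyConstant.const 0, HasCompactSupport.zero⟩
  smul_mem' c _ hf := ⟨hf.1.comp (c • ·), hf.2.mono (Function.support_const_smul_subset c _)⟩

variable (K) in
def fiber (s : S) : Submodule K (X → K) where
  carrier := FibSet K T s
  add_mem' hf hg :=
    ⟨(lcSubmodule K X).add_mem hf.1 hg.1, fun x hx => by simp [hf.2 x hx, hg.2 x hx]⟩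
  zero_mem' := ⟨(lcSubmodule K X).zero_mem, fun _ _ => rfl⟩
  smul_mem' c _ hf := ⟨(lcSubmodule K X).smul_mem c hf.1, fun x hx => by simp [hf.2 x hx]⟩

theorem indicator_mem_lcSet {U : Set X} (hU : IsClopen U) {f : X → K} (hf : f ∈ LcSet K X) :
    U.indicator f ∈ LcSet K X :=
  ⟨(LocallyConstant.indicator ⟨f, hf.1⟩ hU).isLocallyConstant, hf.2.mono (by simp)⟩

theorem indicator_target_mem_fibSet (s : S) {f : X → K} (hf : f ∈ LcSet K X) :
    (T.θ s).target.indicator f ∈ FibSet K T s :=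
  ⟨indicator_mem_lcSet (T.isClopen_target s) hf, fun _ hx => Set.indicator_of_notMem hx f⟩

theorem indicator_mem_fibSet {U : Set X} (hU : IsClopen U) {s : S} {f : X → K}
    (hf : f ∈ FibSet K T s) : U.indicator f ∈ FibSet K T s :=
  ⟨indicator_mem_lcSet hU hf.1, fun x hx => by simp [hf.2 x hx]⟩

theorem mul_mem_fibSet {s : S} {f g : X → K} (hf : f ∈ LcSet K X) (hg : g ∈ FibSet K T s) :
    f * g ∈ FibSet K T s :=
  ⟨⟨hf.1.mul hg.1.1, hg.1.2.mul_left⟩, fun x hx => by simp [hg.2 x hx]⟩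

theorem fibSet_mul_subset (s t : S) : FibSet K T (s * t) ⊆ FibSet K T s :=
  fun _ hf => ⟨hf.1, fun x hx => hf.2 x fun hxst => hx (T.target_mul s t ▸ hxst).1⟩

theorem isLocallyConstant_barAlpha (s : S) {g : X → K} (hg : IsLocallyConstant g) :
    IsLocallyConstant (barAlpha K T s g) := fun A => by
  rw [barAlpha, Set.indicator_preimage, Set.ite, Set.sdiff_eq, Set.inter_comm]
  exact ((T.θ s).continuousOn_symm.isOpen_inter_preimage (T.isClopen_target s).isOpen
    (hg A)).union ((IsLocallyConstant.const 0 A).inter (T.isClopen_target s).compl.isOpen)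

theorem barAlpha_sum {ι : Type*} (F : Finset ι) (s : S) (g : ι → X → K) :
    barAlpha K T s (∑ i ∈ F, g i) = ∑ i ∈ F, barAlpha K T s (g i) := by
  funext x
  by_cases hx : x ∈ (T.θ s).target <;> simp [barAlpha, hx]

theorem mul_barAlpha_mem_fibSet {s t : S} {f g : X → K} (hf : f ∈ FibSet K T s)
    (hg : g ∈ FibSet K T t) : f * barAlpha K T s g ∈ FibSet K T (s * t) := by
  refine ⟨⟨hf.1.1.mul (T.isLocallyConstant_barAlpha s hg.1.1), hf.1.2.mul_right⟩, fun x hx => ?_⟩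
  rw [target_mul, Set.mem_inter_iff, not_and] at hx
  by_cases hxs : x ∈ (T.θ s).target
  · simp [barAlpha, hxs, hg.2 _ (hx hxs)]
  · simp [barAlpha, hxs]

theorem barAlpha_of_isIdempotentElem {e : S} (he : IsIdempotentElem e) (g : X → K) :
    barAlpha K T e g = (T.θ e).target.indicator g :=
  Set.indicator_congr fun _ hx => congrArg g (T.symm_apply_of_isIdempotentElem he hx)

theorem mul_barAlpha_of_isIdempotentElem {e : S} (he : IsIdempotentElem e) {f : X → K}
    (hf : f ∈ FibSet K T e) (g : X → K) : f * barAlpha K T e g = f * g := by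
  rw [barAlpha_of_isIdempotentElem T he]
  funext x
  by_cases hx : x ∈ (T.θ e).target
  · simp [hx]
  · simp [hf.2 x hx]

end AmpleSystem

namespace CP

variable {K} {A : Type*} [Semiring A] [Algebra K A]

structure RespectsRel (T : AmpleSystem S X) (D : S → (X → K) → A) : Prop where
  eq_zero : ∀ s f, f ∉ FibSet K T s → D s f = 0
  map_add : ∀ s f g, f ∈ FibSet K T s → g ∈ FibSet K T s → D s (f + g) = D s f + D s g
  map_smul : ∀ s (c : K) f, f ∈ FibSet K T s → D s (c • f) = c • D s f
  map_mul : ∀ s t f g, f ∈ FibSet K T s → g ∈ FibSet K T t →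
    D s f * D t g = D (s * t) (f * barAlpha K T s g)
  eq_of_isle : ∀ s t f, ISle s t → f ∈ FibSet K T s → D s f = D t f

variable {T : AmpleSystem S X} {D : S → (X → K) → A}

noncomputable def lift (hD : RespectsRel T D) : CP K T →ₐ[K] A :=
  RingQuot.liftAlgHom K ⟨FreeAlgebra.lift K fun p => D p.1 p.2, fun _ _ h => by
    cases h with
    | zero s f hf => simpa using hD.eq_zero s f hf
    | add s f g hf hg => simpa using hD.map_add s f g hf hg
    | smul s c f hf => simpa using hD.map_smul s c f hf
    | mul s t f g hf hg => simpa using hD.map_mul s t f g hf hg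
    | incl s t f hst hf => simpa using hD.eq_of_isle s t f hst hf⟩

@[simp]
theorem lift_Delta (hD : RespectsRel T D) (s : S) (f : X → K) :
    lift hD (Delta K T s f) = D s f := by
  simp [lift, Delta]

theorem algHom_ext {φ ψ : CP K T →ₐ[K] A} (h : ∀ s f, φ (Delta K T s f) = ψ (Delta K T s f)) :
    φ = ψ :=
  RingQuot.ringQuot_ext' _ _ _ <| FreeAlgebra.hom_ext <| funext fun p => h p.1 p.2

end CP

section Delta

variable {K} (T : AmpleSystem S X)

theorem Delta_eq_zero {s : S} {f : X → K} (h : f ∉ FibSet K T s) : Delta K T s f = 0 := by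
  simpa [Delta] using RingQuot.mkAlgHom_rel K (CPRel.zero s f h)

theorem Delta_add {s : S} {f g : X → K} (hf : f ∈ FibSet K T s) (hg : g ∈ FibSet K T s) :
    Delta K T s (f + g) = Delta K T s f + Delta K T s g := by
  simpa [Delta] using RingQuot.mkAlgHom_rel K (CPRel.add s f g hf hg)

theorem Delta_smul {s : S} (c : K) {f : X → K} (hf : f ∈ FibSet K T s) :
    Delta K T s (c • f) = c • Delta K T s f := by
  simpa [Delta] using RingQuot.mkAlgHom_rel K (CPRel.smul s c f hf)

theorem Delta_mul {s t : S} {f g : X → K} (hf : f ∈ FibSet K T s) (hg : g ∈ FibSet K T t) :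
    Delta K T s f * Delta K T t g = Delta K T (s * t) (f * barAlpha K T s g) := by
  simpa [Delta] using RingQuot.mkAlgHom_rel K (CPRel.mul s t f g hf hg)

theorem Delta_incl {s t : S} {f : X → K} (hle : ISle s t) (hf : f ∈ FibSet K T s) :
    Delta K T s f = Delta K T t f :=
  RingQuot.mkAlgHom_rel K (CPRel.incl s t f hle hf)

theorem Delta_zero (s : S) : Delta K T s 0 = 0 := by
  simpa using Delta_smul T (0 : K) (T.fiber K s).zero_mem

theorem Delta_sum {ι : Type*} (F : Finset ι) {s : S} {p : ι → X → K}
    (hp : ∀ i ∈ F, p i ∈ FibSet K T s) :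
    Delta K T s (∑ i ∈ F, p i) = ∑ i ∈ F, Delta K T s (p i) := by
  classical
  induction F using Finset.induction_on with
  | empty => simpa using Delta_zero T s
  | insert a F ha ih =>
    rw [Finset.sum_insert ha, Finset.sum_insert ha,
      Delta_add T (hp a (Finset.mem_insert_self a F))
        ((T.fiber K s).sum_mem fun i hi => hp i (Finset.mem_insert_of_mem hi)),
      ih fun i hi => hp i (Finset.mem_insert_of_mem hi)]

theorem Delta_eq_of_isIdempotentElem {e e' : S} (he : IsIdempotentElem e)
    (he' : IsIdempotentElem e') {f : X → K} (hf : f ∈ FibSet K T e) (hf' : f ∈ FibSet K T e') :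
    Delta K T e f = Delta K T e' f := by
  have hcomm : e * e' = e' * e := InverseSemigroup.idem_comm e e' he he'
  have hmem : f ∈ FibSet K T (e * e') := by
    refine ⟨hf.1, fun x hx => ?_⟩
    rw [T.target_mul_of_isIdempotentElem he, Set.mem_inter_iff, not_and_or] at hx
    exact hx.elim (hf.2 x) (hf'.2 x)
  calc Delta K T e f = Delta K T (e * e') f := (Delta_incl T ⟨e', he', rfl⟩ hmem).symm
    _ = Delta K T e' f := by rw [hcomm]; exact Delta_incl T ⟨e, he, rfl⟩ (hcomm ▸ hmem)

end Delta

namespace AmpleSystem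

variable {K} (T : AmpleSystem S X)

theorem sum_Delta_eq_zero {ι : Type*} (F : Finset ι) {e : ι → S}
    (he : ∀ i, IsIdempotentElem (e i)) {h : ι → X → K} (hh : ∀ i, h i ∈ FibSet K T (e i))
    (hsum : ∑ i ∈ F, h i = 0) : ∑ i ∈ F, Delta K T (e i) (h i) = 0 := by
  classical
  induction F using Finset.induction_on generalizing h with
  | empty => rfl
  | insert a F ha ih =>
    rw [Finset.sum_insert ha] at hsum ⊢
    set U := (T.θ (e a)).target
    have hin i : U.indicator (h i) ∈ FibSet K T (e i) :=
      T.indicator_mem_fibSet (T.isClopen_target _) (hh i)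
    have hin' i : U.indicator (h i) ∈ FibSet K T (e a) :=
      T.indicator_target_mem_fibSet (e a) (hh i).1
    have hout i : Uᶜ.indicator (h i) ∈ FibSet K T (e i) :=
      T.indicator_mem_fibSet (T.isClopen_target _).compl (hh i)
    have hsplit i : Delta K T (e i) (h i) =
        Delta K T (e i) (Uᶜ.indicator (h i)) + Delta K T (e a) (U.indicator (h i)) := by
      rw [← Delta_eq_of_isIdempotentElem T (he i) (he a) (hin i) (hin' i),
        ← Delta_add T (hout i) (hin i), Set.indicator_compl_add_self]
    have houtside : ∑ i ∈ F, Delta K T (e i) (Uᶜ.indicator (h i)) = 0 := by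
      refine ih hout ?_
      funext x
      have hx := congrFun hsum x
      by_cases hxU : x ∈ U
      · simp [hxU]
      · simp_all [(hh a).2 x hxU]
    have hinside : Delta K T (e a) (h a) + ∑ i ∈ F, Delta K T (e a) (U.indicator (h i)) = 0 := by
      rw [← Delta_sum T F fun i _ => hin' i, ← Delta_add T (hh a) ((T.fiber K _).sum_mem
        fun i _ => hin' i), ← Delta_zero T (e a)]
      congr 1
      funext x
      have hx := congrFun hsum x
      by_cases hxU : x ∈ U
      · simp_all
      · simp_all [(hh a).2 x hxU]
    rw [Finset.sum_congr rfl fun i _ => hsplit i, Finset.sum_add_distrib, houtside, zero_add,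
      hinside]

structure IdemDecomp (f : X → K) where
  index : Type
  [fintype : Fintype index]
  e : index → S
  h : index → X → K
  isIdempotentElem : ∀ i, IsIdempotentElem (e i)
  mem_fibSet : ∀ i, h i ∈ FibSet K T (e i)
  sum_eq : ∑ i, h i = f

attribute [instance] IdemDecomp.fintype

namespace IdemDecomp

variable {T} {f g : X → K}

noncomputable def value (d : T.IdemDecomp f) : CP K T :=
  ∑ i, Delta K T (d.e i) (d.h i)

def zero : T.IdemDecomp (0 : X → K) :=
  ⟨Empty, Empty.elim, Empty.elim, (·.elim), (·.elim), by simp⟩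

def single {e : S} (he : IsIdempotentElem e) (hf : f ∈ FibSet K T e) : T.IdemDecomp f :=
  ⟨Unit, fun _ => e, fun _ => f, fun _ => he, fun _ => hf, by simp⟩

def add (d : T.IdemDecomp f) (d' : T.IdemDecomp g) : T.IdemDecomp (f + g) :=
  ⟨d.index ⊕ d'.index, Sum.elim d.e d'.e, Sum.elim d.h d'.h,
    Sum.rec d.isIdempotentElem d'.isIdempotentElem, Sum.rec d.mem_fibSet d'.mem_fibSet,
    by simp [d.sum_eq, d'.sum_eq]⟩

def smul (c : K) (d : T.IdemDecomp f) : T.IdemDecomp (c • f) :=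
  ⟨d.index, d.e, fun i => c • d.h i, d.isIdempotentElem,
    fun i => (T.fiber K _).smul_mem c (d.mem_fibSet i), by rw [← Finset.smul_sum, d.sum_eq]⟩

def mulLeft (hf : f ∈ LcSet K X) (d : T.IdemDecomp g) : T.IdemDecomp (f * g) :=
  ⟨d.index, d.e, fun i => f * d.h i, d.isIdempotentElem,
    fun i => T.mul_mem_fibSet hf (d.mem_fibSet i), by rw [← Finset.mul_sum, d.sum_eq]⟩

theorem mem_lcSet (d : T.IdemDecomp f) : f ∈ LcSet K X :=
  d.sum_eq ▸ (lcSubmodule K X).sum_mem fun i _ => (d.mem_fibSet i).1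

theorem value_single {e : S} (he : IsIdempotentElem e) (hf : f ∈ FibSet K T e) :
    (single he hf).value = Delta K T e f :=
  Fintype.sum_unique (ι := Unit) _

theorem value_add (d : T.IdemDecomp f) (d' : T.IdemDecomp g) :
    (d.add d').value = d.value + d'.value :=
  Fintype.sum_sum_type (α₁ := d.index) (α₂ := d'.index) _

theorem value_smul (c : K) (d : T.IdemDecomp f) : (d.smul c).value = c • d.value := by
  simp only [value, smul, Finset.smul_sum]
  exact Finset.sum_congr rfl fun i _ => Delta_smul T c (d.mem_fibSet i)

theorem value_eq_zero (d : T.IdemDecomp f) (hf : f = 0) : d.value = 0 :=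
  T.sum_Delta_eq_zero _ d.isIdempotentElem d.mem_fibSet (d.sum_eq.trans hf)

theorem value_congr (d d' : T.IdemDecomp f) : d.value = d'.value := by
  have h := (d.add (d'.smul (-1))).value_eq_zero (by simp)
  rw [value_add, value_smul] at h
  exact sub_eq_zero.1 (by rw [sub_eq_add_neg, ← neg_one_smul K]; exact h)

end IdemDecomp

theorem nonempty_idemDecomp_of_tsupport_subset (F : Finset S) {f : X → K}
    (hf : f ∈ LcSet K X) (hF : tsupport f ⊆ ⋃ s ∈ F, (T.θ s).target) :
    Nonempty (T.IdemDecomp f) := by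
  classical
  induction F using Finset.induction_on generalizing f with
  | empty =>
    obtain rfl : f = 0 := tsupport_eq_empty_iff.1 (by simpa using hF)
    exact ⟨.zero⟩
  | insert s F _ ih =>
    set U := (T.θ s).target
    have hrest : tsupport (Uᶜ.indicator f) ⊆ ⋃ t ∈ F, (T.θ t).target := fun x hx => by
      have hxU : x ∉ U :=
        closure_minimal Set.support_indicator_subset (T.isClopen_target s).compl.isClosed hx
      have hxf : x ∈ tsupport f := closure_mono (by simp) hx
      exact (Finset.set_biUnion_insert s F _ ▸ hF hxf).resolve_left hxU
    obtain ⟨d⟩ := ih (indicator_mem_lcSet (T.isClopen_target s).compl hf) hrest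
    have hs : U.indicator f ∈ FibSet K T (s * star s) := by
      simpa only [FibSet, target_mul_star_self] using T.indicator_target_mem_fibSet s hf
    exact ⟨Set.indicator_self_add_compl U f ▸
      (IdemDecomp.single (InverseSemigroup.isIdempotentElem_mul_star_self s) hs).add d⟩

theorem nonempty_idemDecomp {f : X → K} (hf : f ∈ LcSet K X) : Nonempty (T.IdemDecomp f) := by
  obtain ⟨F, hF⟩ := hf.2.elim_finite_subcover (fun s => (T.θ s).target)
    (fun s => (T.isClopen_target s).isOpen) fun x _ => by
      obtain ⟨s, hs⟩ := T.cover x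
      exact Set.mem_iUnion.2 ⟨star s, (T.target_star s).symm ▸ hs⟩
  exact T.nonempty_idemDecomp_of_tsupport_subset F hf hF

open Classical in
/-- The element `f δ₁` of `L_c(X) ⋊ S`, defined through any decomposition of `f`
into fibers over idempotents (and `0` for `f ∉ L_c(X)`). -/
noncomputable def deltaOne (f : X → K) : CP K T :=
  if h : Nonempty (T.IdemDecomp f) then h.some.value else 0

theorem deltaOne_eq {f : X → K} (d : T.IdemDecomp f) : T.deltaOne f = d.value := by
  rw [deltaOne, dif_pos ⟨d⟩]
  exact IdemDecomp.value_congr _ _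

theorem deltaOne_of_notMem {f : X → K} (hf : f ∉ LcSet K X) : T.deltaOne f = 0 :=
  dif_neg fun ⟨d⟩ => hf d.mem_lcSet

theorem deltaOne_eq_Delta {e : S} (he : IsIdempotentElem e) {f : X → K}
    (hf : f ∈ FibSet K T e) : T.deltaOne f = Delta K T e f := by
  rw [T.deltaOne_eq (.single he hf), IdemDecomp.value_single]

theorem deltaOne_add {f g : X → K} (hf : f ∈ LcSet K X) (hg : g ∈ LcSet K X) :
    T.deltaOne (f + g) = T.deltaOne f + T.deltaOne g := by
  obtain ⟨d⟩ := T.nonempty_idemDecomp hf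
  obtain ⟨d'⟩ := T.nonempty_idemDecomp hg
  rw [T.deltaOne_eq (d.add d'), T.deltaOne_eq d, T.deltaOne_eq d', IdemDecomp.value_add]

theorem deltaOne_smul (c : K) {f : X → K} (hf : f ∈ LcSet K X) :
    T.deltaOne (c • f) = c • T.deltaOne f := by
  obtain ⟨d⟩ := T.nonempty_idemDecomp hf
  rw [T.deltaOne_eq (d.smul c), T.deltaOne_eq d, IdemDecomp.value_smul]

theorem deltaOne_mul_Delta {t : S} {f g : X → K} (hf : f ∈ LcSet K X)
    (hg : g ∈ FibSet K T t) : T.deltaOne f * Delta K T t g = Delta K T t (f * g) := by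
  obtain ⟨d⟩ := T.nonempty_idemDecomp hf
  calc T.deltaOne f * Delta K T t g = ∑ i, Delta K T (d.e i) (d.h i) * Delta K T t g := by
        rw [T.deltaOne_eq d, IdemDecomp.value, Finset.sum_mul]
    _ = ∑ i, Delta K T t (d.h i * g) := Finset.sum_congr rfl fun i _ => by
        have hbar := T.mul_barAlpha_of_isIdempotentElem (d.isIdempotentElem i) (d.mem_fibSet i) g
        rw [Delta_mul T (d.mem_fibSet i) hg, hbar]
        exact Delta_incl T (InverseSemigroup.isle_mul_of_isIdempotentElem (d.isIdempotentElem i) t)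
          (hbar ▸ T.mul_barAlpha_mem_fibSet (d.mem_fibSet i) hg)
    _ = Delta K T t (f * g) := by
        rw [← Delta_sum T _ fun i _ => T.mul_mem_fibSet (d.mem_fibSet i).1 hg, ← Finset.sum_mul,
          d.sum_eq]

theorem Delta_mul_deltaOne {s : S} {f g : X → K} (hf : f ∈ FibSet K T s)
    (hg : g ∈ LcSet K X) :
    Delta K T s f * T.deltaOne g = Delta K T s (f * barAlpha K T s g) := by
  obtain ⟨d⟩ := T.nonempty_idemDecomp hg
  have hmem i := T.mul_barAlpha_mem_fibSet hf (d.mem_fibSet i)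
  calc Delta K T s f * T.deltaOne g
        = ∑ i, Delta K T (s * d.e i) (f * barAlpha K T s (d.h i)) := by
        rw [T.deltaOne_eq d, IdemDecomp.value, Finset.mul_sum]
        exact Finset.sum_congr rfl fun i _ => Delta_mul T hf (d.mem_fibSet i)
    _ = ∑ i, Delta K T s (f * barAlpha K T s (d.h i)) := Finset.sum_congr rfl fun i _ =>
        Delta_incl T ⟨d.e i, d.isIdempotentElem i, rfl⟩ (hmem i)
    _ = Delta K T s (f * barAlpha K T s g) := by
        rw [← Delta_sum T _ fun i _ => T.fibSet_mul_subset _ _ (hmem i), ← Finset.mul_sum,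
          ← barAlpha_sum, d.sum_eq]

theorem deltaOne_mul {f g : X → K} (hf : f ∈ LcSet K X) (hg : g ∈ LcSet K X) :
    T.deltaOne f * T.deltaOne g = T.deltaOne (f * g) := by
  obtain ⟨d⟩ := T.nonempty_idemDecomp hg
  rw [T.deltaOne_eq d, T.deltaOne_eq (d.mulLeft hf), IdemDecomp.value, IdemDecomp.value,
    Finset.mul_sum]
  exact Finset.sum_congr rfl fun i _ => T.deltaOne_mul_Delta hf (d.mem_fibSet i)

end AmpleSystem

section Unitization

variable {K} {S' : Type*} [InverseSemigroup S'] {T : AmpleSystem S X} {T' : AmpleSystem S' X}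

theorem fibSet_eq_of_θ_eq {a : S'} {s : S} (h : T'.θ a = T.θ s) :
    FibSet K T' a = FibSet K T s := by
  simp only [FibSet, h]

theorem barAlpha_eq_of_θ_eq {a : S'} {s : S} (h : T'.θ a = T.θ s) :
    barAlpha K T' a = barAlpha K T s := by
  funext f
  simp only [barAlpha, h]

variable (K) in
noncomputable def CP.map (φ : S →ₙ* S') (hφ : ∀ s, T'.θ (φ s) = T.θ s) :
    CP K T →ₐ[K] CP K T' :=
  have hfib (s : S) := fibSet_eq_of_θ_eq (K := K) (hφ s)
  CP.lift (D := fun s => Delta K T' (φ s))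
    { eq_zero := fun s _ hf => Delta_eq_zero T' (by rwa [hfib])
      map_add := fun s _ _ hf hg => Delta_add T' (by rwa [hfib]) (by rwa [hfib])
      map_smul := fun s c _ hf => Delta_smul T' c (by rwa [hfib])
      map_mul := fun s t _ _ hf hg => by
        rw [Delta_mul T' (by rwa [hfib]) (by rwa [hfib]), map_mul, barAlpha_eq_of_θ_eq (hφ s)]
      eq_of_isle := fun _ _ _ hst hf => Delta_incl T' (hst.map φ) (by rwa [hfib]) }

@[simp]
theorem CP.map_Delta (φ : S →ₙ* S') (hφ : ∀ s, T'.θ (φ s) = T.θ s) (s : S) (f : X → K) :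
    CP.map K φ hφ (Delta K T s f) = Delta K T' (φ s) f :=
  CP.lift_Delta _ s f

variable (T T') in
structure IsUnitization (ι : S →ₙ* S') (one : S') : Prop where
  injective : Function.Injective ι
  one_mul : ∀ a, one * a = a
  mul_one : ∀ a, a * one = a
  eq_one_or : ∀ a, a = one ∨ ∃ s, a = ι s
  one_notMem_range : one ∉ Set.range ι
  θ_map : ∀ s, T'.θ (ι s) = T.θ s
  θ_one : T'.θ one = PartialHomeomorph.refl X

namespace IsUnitization

open InverseSemigroup

variable {ι : S →ₙ* S'} {one : S'}

theorem fibSet_map (hU : IsUnitization T T' ι one) (s : S) : FibSet K T' (ι s) = FibSet K T s :=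
  fibSet_eq_of_θ_eq (hU.θ_map s)

theorem barAlpha_map (hU : IsUnitization T T' ι one) (s : S) :
    barAlpha K T' (ι s) = barAlpha K T s :=
  barAlpha_eq_of_θ_eq (hU.θ_map s)

theorem fibSet_one (hU : IsUnitization T T' ι one) : FibSet K T' one = LcSet K X := by
  ext f
  simp [FibSet, hU.θ_one]

theorem barAlpha_one (hU : IsUnitization T T' ι one) (g : X → K) : barAlpha K T' one g = g := by
  simp [barAlpha, hU.θ_one]

theorem isle_of_isle_map (hU : IsUnitization T T' ι one) {s t : S} (h : ISle (ι s) (ι t)) :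
    ISle s t := by
  obtain ⟨g, hg, hst⟩ := h
  rcases hU.eq_one_or g with rfl | ⟨g, rfl⟩
  · rw [hU.mul_one] at hst
    rw [hU.injective hst]
    exact isle_refl t
  · rw [← map_mul] at hst
    exact ⟨g, hU.injective (by rw [map_mul]; exact hg), hU.injective hst⟩

theorem not_isle_one_map (hU : IsUnitization T T' ι one) (t : S) : ¬ ISle one (ι t) := by
  rintro ⟨g, -, h⟩
  rcases hU.eq_one_or g with rfl | ⟨g, rfl⟩
  · exact hU.one_notMem_range ⟨t, (h.trans (hU.mul_one _)).symm⟩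
  · exact hU.one_notMem_range ⟨t * g, (h.trans (map_mul ι t g).symm).symm⟩

theorem isIdempotentElem_of_isle_one (hU : IsUnitization T T' ι one) {s : S}
    (h : ISle (ι s) one) : IsIdempotentElem s := by
  obtain ⟨g, hg, hsg⟩ := h
  rw [hU.one_mul] at hsg
  exact hU.injective (by rw [map_mul, hsg]; exact hg)

theorem isle_one_of_isIdempotentElem (hU : IsUnitization T T' ι one) {s : S}
    (he : IsIdempotentElem s) : ISle (ι s) one :=
  ⟨ι s, he.map ι, (hU.one_mul _).symm⟩

variable (T ι) in
open Classical in
/-- The generators `f δ_a` of `L_c(X) ⋊ S'` sent back to `L_c(X) ⋊ S`. -/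
noncomputable def invDelta (a : S') (f : X → K) : CP K T :=
  if h : ∃ s, a = ι s then Delta K T h.choose f else T.deltaOne f

theorem invDelta_map (hU : IsUnitization T T' ι one) (s : S) (f : X → K) :
    invDelta T ι (ι s) f = Delta K T s f := by
  have h : ∃ s', ι s = ι s' := ⟨s, rfl⟩
  rw [invDelta, dif_pos h, ← hU.injective h.choose_spec]

theorem invDelta_one (hU : IsUnitization T T' ι one) (f : X → K) :
    invDelta T ι one f = T.deltaOne f :=
  dif_neg fun ⟨s, hs⟩ => hU.one_notMem_range ⟨s, hs.symm⟩

theorem invDelta_mul (hU : IsUnitization T T' ι one) {a b : S'} {f g : X → K}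
    (hf : f ∈ FibSet K T' a) (hg : g ∈ FibSet K T' b) :
    invDelta T ι a f * invDelta T ι b g = invDelta T ι (a * b) (f * barAlpha K T' a g) := by
  rcases hU.eq_one_or a with rfl | ⟨s, rfl⟩ <;> rcases hU.eq_one_or b with rfl | ⟨t, rfl⟩
  · rw [hU.fibSet_one] at hf hg
    rw [hU.one_mul, hU.barAlpha_one, hU.invDelta_one, hU.invDelta_one, hU.invDelta_one,
      T.deltaOne_mul hf hg]
  · rw [hU.fibSet_one] at hf
    rw [hU.fibSet_map] at hg
    rw [hU.one_mul, hU.barAlpha_one, hU.invDelta_one, hU.invDelta_map, hU.invDelta_map,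
      T.deltaOne_mul_Delta hf hg]
  · rw [hU.fibSet_map] at hf
    rw [hU.fibSet_one] at hg
    rw [hU.mul_one, hU.barAlpha_map, hU.invDelta_one, hU.invDelta_map, hU.invDelta_map,
      T.Delta_mul_deltaOne hf hg]
  · rw [hU.fibSet_map] at hf hg
    rw [← map_mul, hU.barAlpha_map, hU.invDelta_map, hU.invDelta_map, hU.invDelta_map,
      Delta_mul T hf hg]

theorem invDelta_eq_of_isle (hU : IsUnitization T T' ι one) {a b : S'} {f : X → K}
    (hab : ISle a b) (hf : f ∈ FibSet K T' a) : invDelta T ι a f = invDelta T ι b f := by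
  rcases hU.eq_one_or a with rfl | ⟨s, rfl⟩ <;> rcases hU.eq_one_or b with rfl | ⟨t, rfl⟩
  · rfl
  · exact absurd hab (hU.not_isle_one_map t)
  · rw [hU.fibSet_map] at hf
    rw [hU.invDelta_map, hU.invDelta_one,
      T.deltaOne_eq_Delta (hU.isIdempotentElem_of_isle_one hab) hf]
  · rw [hU.fibSet_map] at hf
    rw [hU.invDelta_map, hU.invDelta_map]
    exact Delta_incl T (hU.isle_of_isle_map hab) hf

theorem respectsRel_invDelta (hU : IsUnitization T T' ι one) :
    CP.RespectsRel T' (invDelta (K := K) T ι) where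
  eq_zero a f hf := by
    rcases hU.eq_one_or a with rfl | ⟨s, rfl⟩
    · rw [hU.invDelta_one, T.deltaOne_of_notMem (hU.fibSet_one (K := K) ▸ hf)]
    · rw [hU.invDelta_map, Delta_eq_zero T (hU.fibSet_map (K := K) s ▸ hf)]
  map_add a f g hf hg := by
    rcases hU.eq_one_or a with rfl | ⟨s, rfl⟩
    · simp only [hU.invDelta_one]
      exact T.deltaOne_add (hU.fibSet_one (K := K) ▸ hf) (hU.fibSet_one (K := K) ▸ hg)
    · simp only [hU.invDelta_map]
      exact Delta_add T (hU.fibSet_map (K := K) s ▸ hf) (hU.fibSet_map (K := K) s ▸ hg)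
  map_smul a c f hf := by
    rcases hU.eq_one_or a with rfl | ⟨s, rfl⟩
    · simp only [hU.invDelta_one]
      exact T.deltaOne_smul c (hU.fibSet_one (K := K) ▸ hf)
    · simp only [hU.invDelta_map]
      exact Delta_smul T c (hU.fibSet_map (K := K) s ▸ hf)
  map_mul _ _ _ _ := hU.invDelta_mul
  eq_of_isle _ _ _ := hU.invDelta_eq_of_isle

theorem map_deltaOne (hU : IsUnitization T T' ι one) (f : X → K) :
    CP.map K ι hU.θ_map (T.deltaOne f) = Delta K T' one f := by
  by_cases hf : f ∈ LcSet K X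
  · obtain ⟨d⟩ := T.nonempty_idemDecomp hf
    calc CP.map K ι hU.θ_map (T.deltaOne f) = ∑ i, Delta K T' (ι (d.e i)) (d.h i) := by
          simp [T.deltaOne_eq d, AmpleSystem.IdemDecomp.value]
      _ = ∑ i, Delta K T' one (d.h i) := Finset.sum_congr rfl fun i _ =>
          Delta_incl T' (hU.isle_one_of_isIdempotentElem (d.isIdempotentElem i))
            (hU.fibSet_map (K := K) _ ▸ d.mem_fibSet i)
      _ = Delta K T' one f := by
          rw [← Delta_sum T' _ fun i _ => hU.fibSet_one (K := K) ▸ (d.mem_fibSet i).1, d.sum_eq]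
  · rw [T.deltaOne_of_notMem hf, map_zero, Delta_eq_zero T' (hU.fibSet_one (K := K) ▸ hf)]

variable (K) in
noncomputable def cpEquiv (hU : IsUnitization T T' ι one) : CP K T ≃ₐ[K] CP K T' :=
  AlgEquiv.ofAlgHom (CP.map K ι hU.θ_map) (CP.lift hU.respectsRel_invDelta)
    (CP.algHom_ext fun a f => by
      rcases hU.eq_one_or a with rfl | ⟨s, rfl⟩
      · simp [hU.invDelta_one, hU.map_deltaOne]
      · simp [hU.invDelta_map])
    (CP.algHom_ext fun s f => by simp [hU.invDelta_map])

end IsUnitization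

end Unitization

theorem crossed_product_unitization_iso_general
    {K S X : Type*} [Field K] [InverseSemigroup S] [TopologicalSpace X]
    (T : AmpleSystem S X)
    {S' : Type*} [InverseSemigroup S'] (ι : S → S') (one : S')
    (hinj : Function.Injective ι)
    (hmul : ∀ s t : S, ι (s * t) = ι s * ι t)
    (hone : ∀ a : S', one * a = a ∧ a * one = a)
    (hcover : ∀ a : S', a = one ∨ ∃ s : S, a = ι s)
    (hne : one ∉ Set.range ι)
    (T' : AmpleSystem S' X)
    (hT : ∀ s : S, T'.θ (ι s) = T.θ s)
    (hT1 : T'.θ one = PartialHomeomorph.refl X) :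
    Nonempty (CP K T ≃ₐ[K] CP K T') :=
  ⟨IsUnitization.cpEquiv K (ι := ⟨ι, hmul⟩)
    ⟨hinj, fun a => (hone a).1, fun a => (hone a).2, hcover, hne, hT, hT1⟩⟩

/-- Unitization.  Let `(θ, S, X)` be an ample dynamical system,
and let `(θ⁺, S⁺, X)` be its unitization: `S⁺ = S ⊔ {1}` (here described by an
inverse semigroup `S'` together with an injective multiplicative and
star-preserving embedding `ι : S → S'` and a unit `one ∈ S'` such that every
element of `S'` is either `one` or of the form `ι s`), with `θ⁺` extending `θ`
so that `θ⁺ 1 = id_X`.  Then `L_c(X) ⋊ S ≅ L_c(X) ⋊ S⁺` as `K`-algebras. -/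
theorem crossed_product_unitization_iso
    {K S X : Type*} [Field K] [InverseSemigroup S] [TopologicalSpace X]
    (T : AmpleSystem S X)
    {S' : Type*} [InverseSemigroup S'] (ι : S → S') (one : S')
    (hinj : Function.Injective ι)
    (hmul : ∀ s t : S, ι (s * t) = ι s * ι t)
    (hstar : ∀ s : S, ι (star s) = star (ι s))
    (hone : ∀ a : S', one * a = a ∧ a * one = a)
    (hstarone : star one = one)
    (hcover : ∀ a : S', a = one ∨ ∃ s : S, a = ι s)
    (hne : one ∉ Set.range ι)
    (T' : AmpleSystem S' X)
    (hT : ∀ s : S, T'.θ (ι s) = T.θ s)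
    (hT1 : T'.θ one = PartialHomeomorph.refl X) :
    Nonempty (CP K T ≃ₐ[K] CP K T') :=
  crossed_product_unitization_iso_general T ι one hinj hmul hone hcover hne T' hT hT1
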